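/- Let p ∈ (1,2) and a > 0. There exists a unique pair of continuously differentiable functions (f,g) : [0,∞) → ℝ² satisfying the system f'(r) = -|g(r)|^{(2-p)/(p-1)} g(r) and g'(r) = -|g(r)| + f(r) for all r ∈ (0,∞), with initial conditions f(0) = a and g(0) = 0; in particular the solution is global (it does not blow up in finite time). Moreover g = -|f'|^{p-2} f', so that f ∈ C¹([0,∞)) with |f'|^{p-2} f' ∈ C¹([0,∞)) is the unique solution of the ordinary differential equation (|f'|^{p-2} f')' + f - |f'|^{p-1} = 0 on (0,∞) with f(0) = a and f'(0) = 0. -/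

import Mathlib

/-!
Put `q = (2-p)/(p-1) > 0`. The system is `x' = V x` for the vector field
`V (f, g) = (-|g|^q g, -|g| + f)` on `ℝ × ℝ`, which is locally Lipschitz because `u ↦ |u|^q u`
is `C¹`; this gives uniqueness. Along a solution the energy `E = f²/2 + |g|^(q+2)/(q+2)` satisfies
`E' = -|g|^(q+1) g`, so `|E'| ≤ (q+2) E` and Grönwall bounds every solution on `[0, T]` a priori.
Truncating `V` outside a ball containing that bound gives a globally Lipschitz bounded field;
its Picard–Lindelöf solution on `[0, T]` cannot reach the boundary of the ball, so it solves
the original system. The solutions on `[0, n]` agree and glue to a global one.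
Finally `u ↦ |u|^q u` and `v ↦ |v|^(p-2) v` are mutually inverse since `(q+1)(p-1) = 1`,
which converts solutions of the system into solutions of the second-order equation and back.
-/

open Set Filter Topology Metric
open scoped NNReal

/-- The first-order system obtained from the second-order ODE via `g = -|f'|^{p-2} f'`:
`f' = -|g|^{(2-p)/(p-1)} g`, `g' = -|g| + f` on `[0,∞)`, with `f(0)=a`, `g(0)=0`,
the pair `(f,g)` being continuously differentiable on `[0,∞)` (in particular global). -/
def SysSol (p a : ℝ) (f g : ℝ → ℝ) : Prop :=
  ContDiffOn ℝ 1 f (Set.Ici 0) ∧ ContDiffOn ℝ 1 g (Set.Ici 0) ∧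
  (∀ r ∈ Set.Ici (0:ℝ), HasDerivWithinAt f (-(|g r| ^ ((2-p)/(p-1)) * g r)) (Set.Ici 0) r) ∧
  (∀ r ∈ Set.Ici (0:ℝ), HasDerivWithinAt g (-|g r| + f r) (Set.Ici 0) r) ∧
  f 0 = a ∧ g 0 = 0

/-- `f` solves `(|f'|^{p-2} f')' + f - |f'|^{p-1} = 0` on `(0,∞)` with `f(0)=a`, `f'(0)=0`;
`fd` is the derivative of `f` and `gd` the derivative of `|f'|^{p-2} f'`, both continuous
on `[0,∞)`, so that `f ∈ C¹([0,∞))` and `|f'|^{p-2} f' ∈ C¹([0,∞))`. -/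
def IsSol (p a : ℝ) (f fd gd : ℝ → ℝ) : Prop :=
  (∀ r ∈ Set.Ici (0:ℝ), HasDerivWithinAt f (fd r) (Set.Ici 0) r) ∧
  ContinuousOn fd (Set.Ici 0) ∧
  (∀ r ∈ Set.Ici (0:ℝ), HasDerivWithinAt (fun s => |fd s| ^ (p-2) * fd s) (gd r) (Set.Ici 0) r) ∧
  ContinuousOn gd (Set.Ici 0) ∧
  (∀ r ∈ Set.Ioi (0:ℝ), gd r + f r - |fd r| ^ (p-1) = 0) ∧
  f 0 = a ∧ fd 0 = 0

noncomputable def signedRpow (r u : ℝ) : ℝ := |u| ^ r * u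

section SignedRpow

variable {r s : ℝ}

lemma signedRpow_def (r u : ℝ) : signedRpow r u = |u| ^ r * u := rfl

lemma signedRpow_neg (r u : ℝ) : signedRpow r (-u) = -signedRpow r u := by
  simp only [signedRpow, abs_neg, mul_neg]

lemma signedRpow_zero (r : ℝ) : signedRpow r 0 = 0 := by
  simp only [signedRpow, mul_zero]

lemma abs_signedRpow (hr : r + 1 ≠ 0) (u : ℝ) : |signedRpow r u| = |u| ^ (r + 1) := by
  rcases eq_or_ne u 0 with rfl | hu
  · simp [signedRpow, Real.zero_rpow hr]
  · rw [signedRpow, abs_mul, abs_of_nonneg (by positivity), Real.rpow_add_one (abs_ne_zero.2 hu)]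

lemma signedRpow_signedRpow (h : (r + 1) * (s + 1) = 1) (u : ℝ) :
    signedRpow s (signedRpow r u) = u := by
  rcases eq_or_ne u 0 with rfl | hu
  · simp only [signedRpow_zero]
  have hu' : 0 < |u| := abs_pos.2 hu
  have hr : r + 1 ≠ 0 := left_ne_zero_of_mul_eq_one h
  rw [signedRpow, abs_signedRpow hr, ← Real.rpow_mul hu'.le, signedRpow, ← mul_assoc,
    ← Real.rpow_add hu', show (r + 1) * s + r = 0 by linear_combination h, Real.rpow_zero,
    one_mul]

lemma hasDerivAt_signedRpow (hr : 0 < r) (y : ℝ) :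
    HasDerivAt (signedRpow r) ((r + 1) * |y| ^ r) y := by
  rcases eq_or_ne y 0 with rfl | hy
  · rw [abs_zero, Real.zero_rpow hr.ne', mul_zero, hasDerivAt_iff_isLittleO]
    have h : Tendsto (fun y : ℝ => |y| ^ r) (𝓝 0) (𝓝 0) := by
      simpa [Real.zero_rpow hr.ne'] using
        (continuous_abs.rpow_const fun _ => Or.inr hr.le).tendsto (0 : ℝ)
    simpa [signedRpow] using
      (Asymptotics.isLittleO_one_iff (F := ℝ)).2 h |>.mul_isBigO (Asymptotics.isBigO_refl id _)
  · have h : HasDerivAt (signedRpow r) (r * |y| ^ (r - 1) * SignType.sign y * y + |y| ^ r * 1) y :=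
      ((Real.hasDerivAt_rpow_const (Or.inl (abs_ne_zero.2 hy))).comp y (hasDerivAt_abs hy)).mul
        (hasDerivAt_id y)
    refine h.congr_deriv ?_
    rw [mul_assoc _ _ y, sign_mul_self, Real.rpow_sub_one (abs_ne_zero.2 hy)]
    field_simp

lemma contDiff_signedRpow (hr : 0 < r) : ContDiff ℝ 1 (signedRpow r) := by
  rw [contDiff_one_iff_deriv]
  refine ⟨fun y => (hasDerivAt_signedRpow hr y).differentiableAt, ?_⟩
  rw [funext fun y => (hasDerivAt_signedRpow hr y).deriv]
  exact continuous_const.mul (continuous_abs.rpow_const fun _ => Or.inr hr.le)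

lemma signedRpow_neg_signedRpow (h : (r + 1) * (s + 1) = 1) (u : ℝ) :
    signedRpow s (-signedRpow r u) = -u := by
  rw [signedRpow_neg, signedRpow_signedRpow h]

lemma abs_signedRpow_rpow (h : (r + 1) * s = 1) (u : ℝ) : |signedRpow r u| ^ s = |u| := by
  rw [abs_signedRpow (left_ne_zero_of_mul_eq_one h), ← Real.rpow_mul (abs_nonneg u), h,
    Real.rpow_one]

end SignedRpow

section Calculus

variable {E F : Type*} [NormedAddCommGroup E] [NormedSpace ℝ E] [NormedAddCommGroup F]
  [NormedSpace ℝ F] {x : ℝ → E × F} {x' : E × F} {s : Set ℝ} {t : ℝ}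

lemma HasDerivWithinAt.fst (h : HasDerivWithinAt x x' s t) :
    HasDerivWithinAt (fun t => (x t).1) x'.1 s t :=
  (ContinuousLinearMap.fst ℝ E F).hasFDerivAt.comp_hasDerivWithinAt t h

lemma HasDerivWithinAt.snd (h : HasDerivWithinAt x x' s t) :
    HasDerivWithinAt (fun t => (x t).2) x'.2 s t :=
  (ContinuousLinearMap.snd ℝ E F).hasFDerivAt.comp_hasDerivWithinAt t h

lemma contDiffOn_one_of_hasDerivWithinAt {f f' : ℝ → F} (hs : UniqueDiffOn ℝ s)
    (h : ∀ u ∈ s, HasDerivWithinAt f (f' u) s u) (hc : ContinuousOn f' s) :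
    ContDiffOn ℝ 1 f s :=
  (contDiffOn_one_iff_derivWithin hs).2 ⟨fun u hu => (h u hu).differentiableWithinAt,
    hc.congr fun u hu => (h u hu).derivWithin (hs u hu)⟩

end Calculus

lemma ContinuousOn.exists_first_mem_of_isClosed {α : Type*} [TopologicalSpace α] {x : ℝ → α}
    {a b : ℝ} {s : Set α} (hx : ContinuousOn x (Icc a b)) (hs : IsClosed s) {t : ℝ}
    (ht : t ∈ Icc a b) (hxt : x t ∈ s) :
    ∃ τ ∈ Icc a b, x τ ∈ s ∧ ∀ u ∈ Ico a τ, x u ∉ s := by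
  have hS : IsClosed (Icc a b ∩ x ⁻¹' s) := hx.preimage_isClosed_of_isClosed isClosed_Icc hs
  have hbdd : BddBelow (Icc a b ∩ x ⁻¹' s) := bddBelow_Icc.mono inter_subset_left
  obtain ⟨hτ, hxτ⟩ := hS.csInf_mem ⟨t, ht, hxt⟩ hbdd
  exact ⟨_, hτ, hxτ, fun u hu hxu =>
    hu.2.not_ge (csInf_le hbdd ⟨⟨hu.1, hu.2.le.trans hτ.2⟩, hxu⟩)⟩


section AutonomousODE

variable {E : Type*} [NormedAddCommGroup E] [NormedSpace ℝ E] {v : E → E}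

lemma HasDerivWithinAt.Ici_of_Icc {x : ℝ → E} {x' : E} {a b t : ℝ} (ht : t ∈ Ico a b)
    (h : HasDerivWithinAt x x' (Icc a b) t) : HasDerivWithinAt x x' (Ici t) t :=
  (hasDerivWithinAt_inter (Iio_mem_nhds ht.2)).mp (h.mono fun _ hs => ⟨ht.1.trans hs.1, hs.2.le⟩)

theorem LocallyLipschitz.eqOn_Icc_of_hasDerivWithinAt (hv : LocallyLipschitz v)
    {x y : ℝ → E} {a b : ℝ}
    (hx : ContinuousOn x (Icc a b)) (hx' : ∀ t ∈ Ico a b, HasDerivWithinAt x (v (x t)) (Ici t) t)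
    (hy : ContinuousOn y (Icc a b)) (hy' : ∀ t ∈ Ico a b, HasDerivWithinAt y (v (y t)) (Ici t) t)
    (h : x a = y a) : EqOn x y (Icc a b) := by
  set s := x '' Icc a b ∪ y '' Icc a b
  have hs : IsCompact s := (isCompact_Icc.image_of_continuousOn hx).union
    (isCompact_Icc.image_of_continuousOn hy)
  obtain ⟨K, hK⟩ := hv.locallyLipschitzOn.exists_lipschitzOnWith_of_compact hs
  exact ODE_solution_unique_of_mem_Icc_right (v := fun _ => v) (s := fun _ => s)
    (fun _ _ => hK) hx hx' (fun t ht => .inl ⟨t, Ico_subset_Icc_self ht, rfl⟩)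
    hy hy' (fun t ht => .inr ⟨t, Ico_subset_Icc_self ht, rfl⟩) h

theorem LocallyLipschitz.exists_forall_hasDerivWithinAt_Ici (hv : LocallyLipschitz v) {x₀ : E}
    (h : ∀ n : ℕ, ∃ x : ℝ → E, x 0 = x₀ ∧
      ∀ t ∈ Icc 0 (n : ℝ), HasDerivWithinAt x (v (x t)) (Icc 0 (n : ℝ)) t) :
    ∃ x : ℝ → E, x 0 = x₀ ∧ ∀ t ∈ Ici (0 : ℝ), HasDerivWithinAt x (v (x t)) (Ici 0) t := by
  choose X hX₀ hX using h
  have hcont (n : ℕ) : ContinuousOn (X n) (Icc 0 (n : ℝ)) :=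
    fun t ht => (hX n t ht).continuousWithinAt
  have hagree {m n : ℕ} (hmn : m ≤ n) : EqOn (X m) (X n) (Icc 0 (m : ℝ)) := by
    have hsub : Icc 0 (m : ℝ) ⊆ Icc 0 n := Icc_subset_Icc_right (by exact_mod_cast hmn)
    refine hv.eqOn_Icc_of_hasDerivWithinAt (hcont m) (fun t ht => (hX m t ?_).Ici_of_Icc ht)
      ((hcont n).mono hsub) (fun t ht => ?_) ((hX₀ m).trans (hX₀ n).symm)
    · exact Ico_subset_Icc_self ht
    · exact (hX n t (hsub (Ico_subset_Icc_self ht))).Ici_of_Icc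
        ⟨ht.1, ht.2.trans_le (by exact_mod_cast hmn)⟩
  refine ⟨fun t => X (⌊t⌋₊ + 1) t, by simpa using hX₀ 1, fun t ht => ?_⟩
  set n := ⌊t⌋₊ + 1
  have htn : t < n := by simpa [n] using Nat.lt_floor_add_one t
  have heq : EqOn (fun s => X (⌊s⌋₊ + 1) s) (X n) (Ici 0 ∩ Iio (n : ℝ)) := fun s hs =>
    hagree ((Nat.floor_lt hs.1).2 hs.2) ⟨hs.1, by exact_mod_cast (Nat.lt_floor_add_one s).le⟩
  have hd := ((hX n t ⟨ht, htn.le⟩).mono fun s hs => ⟨hs.1, hs.2.le⟩ :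
    HasDerivWithinAt (X n) _ (Ici 0 ∩ Iio (n : ℝ)) t)
  rw [← heq ⟨ht, htn⟩] at hd
  exact (hasDerivWithinAt_inter (Iio_mem_nhds htn)).mp (hd.congr heq (heq ⟨ht, htn⟩))

end AutonomousODE

section Truncation

variable {v : ℝ × ℝ → ℝ × ℝ}

lemma LocallyLipschitz.exists_lipschitzWith_eqOn_closedBall (hv : LocallyLipschitz v) (R : ℝ) :
    ∃ (w : ℝ × ℝ → ℝ × ℝ) (K L : ℝ≥0), LipschitzWith K w ∧ (∀ x, ‖w x‖ ≤ L) ∧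
      EqOn w v (closedBall 0 R) := by
  set c : ℝ → ℝ := fun y => max (-R) (min R y)
  have hc : LipschitzWith 1 c := (LipschitzWith.id.const_min R).const_max (-R)
  have hcR (y : ℝ) : |c y| ≤ |R| :=
    abs_le.2 ⟨(neg_le_neg (le_abs_self R)).trans (le_max_left _ _),
      max_le (neg_le_abs R) ((min_le_left _ _).trans (le_abs_self R))⟩
  have hcid {y : ℝ} (hy : |y| ≤ R) : c y = y := by
    rw [abs_le] at hy; simp [c, hy.1, hy.2]
  -- a retraction onto `closedBall 0 R`, since the norm of `ℝ × ℝ` is the sup norm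
  set ρ : ℝ × ℝ → ℝ × ℝ := fun x => (c x.1, c x.2)
  have hρ : LipschitzWith 1 ρ := by
    simpa using (hc.comp LipschitzWith.prod_fst).prodMk (hc.comp LipschitzWith.prod_snd)
  have hρR (x) : ρ x ∈ closedBall 0 |R| := by
    simpa [Prod.norm_def] using ⟨hcR x.1, hcR x.2⟩
  obtain ⟨K, hK⟩ := hv.locallyLipschitzOn.exists_lipschitzOnWith_of_compact
    (isCompact_closedBall (0 : ℝ × ℝ) |R|)
  obtain ⟨L, hL⟩ := (isCompact_closedBall (0 : ℝ × ℝ) |R|).exists_bound_of_continuousOn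
    hv.continuous.continuousOn
  refine ⟨v ∘ ρ, K * 1, L.toNNReal,
    lipschitzOnWith_univ.mp (hK.comp hρ.lipschitzOnWith fun x _ => hρR x),
    fun x => (hL _ (hρR x)).trans (Real.le_coe_toNNReal L), fun x hx => ?_⟩
  have hx' : |x.1| ≤ R ∧ |x.2| ≤ R := by simpa [Prod.norm_def] using hx
  simp [ρ, hcid hx'.1, hcid hx'.2]

theorem LocallyLipschitz.exists_hasDerivWithinAt_Icc_of_norm_lt (hv : LocallyLipschitz v)
    {x₀ : ℝ × ℝ} {T R : ℝ} (hT : 0 ≤ T)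
    (hR : ∀ τ ∈ Icc 0 T, ∀ x : ℝ → ℝ × ℝ, x 0 = x₀ → ContinuousOn x (Icc 0 τ) →
      (∀ t ∈ Ico 0 τ, HasDerivWithinAt x (v (x t)) (Ici t) t) → ‖x τ‖ < R) :
    ∃ x : ℝ → ℝ × ℝ, x 0 = x₀ ∧ ∀ t ∈ Icc 0 T, HasDerivWithinAt x (v (x t)) (Icc 0 T) t := by
  obtain ⟨w, K, L, hwK, hwL, hwv⟩ := hv.exists_lipschitzWith_eqOn_closedBall R
  have hPL : IsPicardLindelof (fun _ => w) (tmin := 0) (tmax := T) ⟨0, left_mem_Icc.2 hT⟩ x₀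
      (L * T.toNNReal) 0 L K :=
    .of_time_independent (fun x _ => hwL x) hwK.lipschitzOnWith (by simp [hT])
  obtain ⟨y, hy₀, hy⟩ := hPL.exists_eq_forall_mem_Icc_hasDerivWithinAt₀
  have hyc : ContinuousOn y (Icc 0 T) := fun t ht => (hy t ht).continuousWithinAt
  -- before its first exit from the open ball, `y` solves the untruncated equation
  have hyR : ∀ t ∈ Icc 0 T, ‖y t‖ < R := by
    by_contra! ⟨t, ht, hyt⟩
    obtain ⟨τ, hτ, hyτ, hlt⟩ := hyc.exists_first_mem_of_isClosed
      (isClosed_le continuous_const continuous_norm) ht hyt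
    refine (hR τ hτ y hy₀ (hyc.mono (Icc_subset_Icc_right hτ.2)) fun t ht => ?_).not_ge hyτ
    rw [← hwv (mem_closedBall_zero_iff.2 (not_le.1 (hlt t ht)).le)]
    exact (hy t ⟨ht.1, ht.2.le.trans hτ.2⟩).Ici_of_Icc ⟨ht.1, ht.2.trans_le hτ.2⟩
  refine ⟨y, hy₀, fun t ht => ?_⟩
  rw [← hwv (mem_closedBall_zero_iff.2 (hyR t ht).le)]
  exact hy t ht

end Truncation

noncomputable def odeField (q : ℝ) (x : ℝ × ℝ) : ℝ × ℝ := (-signedRpow q x.2, -|x.2| + x.1)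

noncomputable def odeEnergy (q : ℝ) (x : ℝ × ℝ) : ℝ := x.1 ^ 2 / 2 + |x.2| ^ (q + 2) / (q + 2)

section OdeField

variable {q : ℝ}

lemma locallyLipschitz_odeField (hq : 0 < q) : LocallyLipschitz (odeField q) :=
  ((contDiff_signedRpow hq).locallyLipschitz.comp
    LipschitzWith.prod_snd.locallyLipschitz).neg.prodMk
    ((lipschitzWith_one_norm.comp LipschitzWith.prod_snd).locallyLipschitz.neg.add
      LipschitzWith.prod_fst.locallyLipschitz)

lemma odeEnergy_nonneg (hq : 0 < q) (x : ℝ × ℝ) : 0 ≤ odeEnergy q x := by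
  unfold odeEnergy; positivity

lemma continuous_odeEnergy (hq : 0 < q) : Continuous (odeEnergy q) := by
  unfold odeEnergy
  exact ((continuous_fst.pow 2).div_const 2).add
    (((continuous_abs.comp continuous_snd).rpow_const fun _ => Or.inr (by linarith)).div_const _)

lemma HasDerivWithinAt.odeEnergy_comp (hq : 0 < q) {x : ℝ → ℝ × ℝ} {s : Set ℝ} {t : ℝ}
    (hx : HasDerivWithinAt x (odeField q (x t)) s t) :
    HasDerivWithinAt (fun t => odeEnergy q (x t)) (-(signedRpow q (x t).2 * |(x t).2|)) s t := by
  have h₁ := (hx.fst.pow 2).div_const 2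
  have h₂ := ((hasDerivAt_abs_rpow (x t).2 (by linarith : 1 < q + 2)).comp_hasDerivWithinAt t
    hx.snd).div_const (q + 2)
  refine (h₁.add h₂).congr_deriv ?_
  simp only [odeField, signedRpow, add_sub_cancel_right]
  field_simp
  ring

lemma abs_signedRpow_mul_abs_le (hq : 0 < q) (x : ℝ × ℝ) :
    |signedRpow q x.2| * |x.2| ≤ (q + 2) * odeEnergy q x := by
  rw [abs_signedRpow (by linarith), ← Real.rpow_add_one' (abs_nonneg _)
    (by linarith), add_assoc, one_add_one_eq_two, odeEnergy, mul_add,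
    mul_div_cancel₀ _ (by linarith)]
  nlinarith [sq_nonneg x.1]

lemma odeEnergy_le_mul_exp (hq : 0 < q) {x : ℝ → ℝ × ℝ} {τ : ℝ} (hx : ContinuousOn x (Icc 0 τ))
    (hx' : ∀ t ∈ Ico 0 τ, HasDerivWithinAt x (odeField q (x t)) (Ici t) t) :
    ∀ t ∈ Icc 0 τ, odeEnergy q (x t) ≤ odeEnergy q (x 0) * Real.exp ((q + 2) * t) := by
  have hnorm (t : ℝ) : ‖odeEnergy q (x t)‖ = odeEnergy q (x t) :=
    Real.norm_of_nonneg (odeEnergy_nonneg hq _)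
  intro t ht
  have := norm_le_gronwallBound_of_norm_deriv_right_le (K := q + 2) (ε := 0)
    ((continuous_odeEnergy hq).comp_continuousOn hx) (fun t ht => (hx' t ht).odeEnergy_comp hq)
    (hnorm 0).le (fun t _ => by simpa [hnorm] using abs_signedRpow_mul_abs_le hq (x t)) t ht
  rwa [gronwallBound_ε0, sub_zero, Function.comp_apply, hnorm] at this

lemma norm_lt_of_odeEnergy_lt (hq : 0 < q) {ρ : ℝ} (hρ : 1 ≤ ρ) {x : ℝ × ℝ}
    (h : odeEnergy q x < ρ / (q + 2)) : ‖x‖ < ρ := by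
  have hq2 : 0 < q + 2 := by linarith
  have h₁ : 0 ≤ x.1 ^ 2 / 2 := by positivity
  have h₂ : 0 ≤ |x.2| ^ (q + 2) / (q + 2) := by positivity
  rw [odeEnergy] at h
  rw [Prod.norm_def, max_lt_iff, Real.norm_eq_abs, Real.norm_eq_abs]
  constructor
  · by_contra! hx
    have : ρ ≤ x.1 ^ 2 := by nlinarith [sq_abs x.1]
    have : ρ / (q + 2) ≤ x.1 ^ 2 / 2 := div_le_div₀ (by positivity) this two_pos (by linarith)
    linarith
  · by_contra! hx
    have : ρ ≤ |x.2| ^ (q + 2) := calc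
      ρ = ρ ^ (1 : ℝ) := (Real.rpow_one ρ).symm
      _ ≤ ρ ^ (q + 2) := Real.rpow_le_rpow_of_exponent_le hρ (by linarith)
      _ ≤ |x.2| ^ (q + 2) := Real.rpow_le_rpow (by linarith) hx hq2.le
    have : ρ / (q + 2) ≤ |x.2| ^ (q + 2) / (q + 2) := div_le_div_of_nonneg_right this hq2.le
    linarith

theorem exists_odeField_solution_Icc (hq : 0 < q) (x₀ : ℝ × ℝ) {T : ℝ} (hT : 0 ≤ T) :
    ∃ x : ℝ → ℝ × ℝ, x 0 = x₀ ∧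
      ∀ t ∈ Icc 0 T, HasDerivWithinAt x (odeField q (x t)) (Icc 0 T) t := by
  set C := odeEnergy q x₀ * Real.exp ((q + 2) * T)
  have hC : 0 ≤ C := mul_nonneg (odeEnergy_nonneg hq x₀) (Real.exp_pos _).le
  refine (locallyLipschitz_odeField hq).exists_hasDerivWithinAt_Icc_of_norm_lt hT
    (R := (q + 2) * C + 1) fun τ hτ x hx₀ hx hx' => norm_lt_of_odeEnergy_lt hq (by nlinarith) ?_
  calc odeEnergy q (x τ) ≤ odeEnergy q x₀ * Real.exp ((q + 2) * τ) :=
        hx₀ ▸ odeEnergy_le_mul_exp hq hx hx' τ ⟨hτ.1, le_rfl⟩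
    _ ≤ C := mul_le_mul_of_nonneg_left
        (Real.exp_le_exp.2 (mul_le_mul_of_nonneg_left hτ.2 (by linarith))) (odeEnergy_nonneg hq x₀)
    _ < ((q + 2) * C + 1) / (q + 2) := by
      rw [lt_div_iff₀ (by linarith)]; linarith

theorem exists_odeField_solution (hq : 0 < q) (x₀ : ℝ × ℝ) :
    ∃ x : ℝ → ℝ × ℝ, x 0 = x₀ ∧
      ∀ t ∈ Ici (0 : ℝ), HasDerivWithinAt x (odeField q (x t)) (Ici 0) t :=
  (locallyLipschitz_odeField hq).exists_forall_hasDerivWithinAt_Ici fun n =>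
    exists_odeField_solution_Icc hq x₀ n.cast_nonneg

end OdeField

section SysSol

variable {p a : ℝ}

lemma two_sub_div_sub_one_pos (hp : p ∈ Ioo (1 : ℝ) 2) : 0 < (2 - p) / (p - 1) :=
  div_pos (by linarith [hp.2]) (by linarith [hp.1])

lemma two_sub_div_sub_one_add_one_mul (hp : p ≠ 1) : ((2 - p) / (p - 1) + 1) * (p - 1) = 1 := by
  field_simp [sub_ne_zero.2 hp]
  ring

lemma SysSol.hasDerivWithinAt {f g : ℝ → ℝ} (S : SysSol p a f g) :
    ∀ t ∈ Ici (0 : ℝ), HasDerivWithinAt (fun t => (f t, g t))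
      (odeField ((2 - p) / (p - 1)) (f t, g t)) (Ici 0) t :=
  fun t ht => (S.2.2.1 t ht).prodMk (S.2.2.2.1 t ht)

lemma SysSol.eqOn (hp : p ∈ Ioo (1 : ℝ) 2) {f₁ g₁ f₂ g₂ : ℝ → ℝ} (S₁ : SysSol p a f₁ g₁)
    (S₂ : SysSol p a f₂ g₂) :
    EqOn (fun t => (f₁ t, g₁ t)) (fun t => (f₂ t, g₂ t)) (Ici 0) := fun t ht =>
  (locallyLipschitz_odeField (two_sub_div_sub_one_pos hp)).eqOn_Icc_of_hasDerivWithinAt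
    ((S₁.1.continuousOn.prodMk S₁.2.1.continuousOn).mono Icc_subset_Ici_self)
    (fun s hs => (S₁.hasDerivWithinAt s hs.1).mono (Ici_subset_Ici.2 hs.1))
    ((S₂.1.continuousOn.prodMk S₂.2.1.continuousOn).mono Icc_subset_Ici_self)
    (fun s hs => (S₂.hasDerivWithinAt s hs.1).mono (Ici_subset_Ici.2 hs.1))
    (by rw [S₁.2.2.2.2.1, S₁.2.2.2.2.2, S₂.2.2.2.2.1, S₂.2.2.2.2.2]) ⟨ht, le_rfl⟩

lemma exists_sysSol (hp : p ∈ Ioo (1 : ℝ) 2) : ∃ f g : ℝ → ℝ, SysSol p a f g := by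
  obtain ⟨x, hx₀, hx⟩ := exists_odeField_solution (two_sub_div_sub_one_pos hp) (a, 0)
  have hv : ContinuousOn (fun t => odeField ((2 - p) / (p - 1)) (x t)) (Ici 0) :=
    (locallyLipschitz_odeField (two_sub_div_sub_one_pos hp)).continuous.comp_continuousOn
      fun t ht => (hx t ht).continuousWithinAt
  have hf : ∀ t ∈ Ici (0 : ℝ), HasDerivWithinAt (fun t => (x t).1)
      (odeField ((2 - p) / (p - 1)) (x t)).1 (Ici 0) t :=
    fun t ht => (hx t ht).fst
  have hg : ∀ t ∈ Ici (0 : ℝ), HasDerivWithinAt (fun t => (x t).2)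
      (odeField ((2 - p) / (p - 1)) (x t)).2 (Ici 0) t :=
    fun t ht => (hx t ht).snd
  exact ⟨_, _, contDiffOn_one_of_hasDerivWithinAt (uniqueDiffOn_Ici 0) hf hv.fst,
    contDiffOn_one_of_hasDerivWithinAt (uniqueDiffOn_Ici 0) hg hv.snd, hf, hg,
    by rw [hx₀], by rw [hx₀]⟩

lemma SysSol.isSol (hp : p ∈ Ioo (1 : ℝ) 2) {f g : ℝ → ℝ} (S : SysSol p a f g) :
    IsSol p a f (fun r => -(|g r| ^ ((2 - p) / (p - 1)) * g r)) (fun r => |g r| - f r) := by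
  have hpq := two_sub_div_sub_one_add_one_mul hp.1.ne'
  have hφ : (fun r => |-signedRpow ((2 - p) / (p - 1)) (g r)| ^ (p - 2) *
      -signedRpow ((2 - p) / (p - 1)) (g r)) = fun r => -g r :=
    funext fun r => signedRpow_neg_signedRpow (by linear_combination hpq) (g r)
  simp only [← signedRpow_def]
  refine ⟨S.2.2.1, ((contDiff_signedRpow (two_sub_div_sub_one_pos hp)).continuous.comp_continuousOn
      S.2.1.continuousOn).neg, fun r hr => ?_, S.2.1.continuousOn.abs.sub S.1.continuousOn,
    fun r _ => ?_, S.2.2.2.2.1, ?_⟩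
  · exact hφ ▸ (S.2.2.2.1 r hr).neg.congr_deriv (by ring)
  · simp only [abs_neg, abs_signedRpow_rpow hpq]
    ring
  · simp [S.2.2.2.2.2, signedRpow_zero]

lemma IsSol.sysSol (hp : p ∈ Ioo (1 : ℝ) 2) {h hd kd : ℝ → ℝ} (S : IsSol p a h hd kd) :
    SysSol p a h (fun r => -(|hd r| ^ (p - 2) * hd r)) := by
  have hpq := two_sub_div_sub_one_add_one_mul hp.1.ne'
  have hG' : ∀ r ∈ Ici (0 : ℝ), HasDerivWithinAt (fun r => -signedRpow (p - 2) (hd r)) (-kd r)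
      (Ici 0) r := fun r hr => (S.2.2.1 r hr).neg
  have habs (r : ℝ) : |-signedRpow (p - 2) (hd r)| = |hd r| ^ (p - 1) := by
    rw [abs_neg, abs_signedRpow (by linarith [hp.1]), show p - 2 + 1 = p - 1 by ring]
  -- the equation is only assumed on `(0, ∞)`; continuity extends it to `r = 0`
  have hkd : EqOn kd (fun r => |hd r| ^ (p - 1) - h r) (Ici 0) :=
    EqOn.of_subset_closure (fun r hr => by linarith [S.2.2.2.2.1 r hr]) S.2.2.2.1
      (((continuous_abs.rpow_const fun _ => Or.inr (by linarith [hp.1])).comp_continuousOn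
        S.2.1).sub fun r hr => (S.1 r hr).continuousWithinAt)
      Ioi_subset_Ici_self (closure_Ioi (0 : ℝ)).ge
  simp only [← signedRpow_def]
  refine ⟨contDiffOn_one_of_hasDerivWithinAt (uniqueDiffOn_Ici 0) S.1 S.2.1,
    contDiffOn_one_of_hasDerivWithinAt (uniqueDiffOn_Ici 0) hG' S.2.2.2.1.neg,
    fun r hr => (S.1 r hr).congr_deriv ?_, fun r hr => (hG' r hr).congr_deriv ?_,
    S.2.2.2.2.2.1, ?_⟩
  · exact (neg_eq_iff_eq_neg.2
      (signedRpow_neg_signedRpow (by linear_combination hpq) (hd r))).symm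
  · simp only [habs, hkd hr]
    ring
  · simp [S.2.2.2.2.2.2, signedRpow_zero]

end SysSol

theorem stmt0 (p a : ℝ) (hp : p ∈ Set.Ioo (1:ℝ) 2) :
    (∃ f g : ℝ → ℝ, SysSol p a f g) ∧
    (∀ f₁ g₁ f₂ g₂ : ℝ → ℝ, SysSol p a f₁ g₁ → SysSol p a f₂ g₂ →
      Set.EqOn f₁ f₂ (Set.Ici 0) ∧ Set.EqOn g₁ g₂ (Set.Ici 0)) ∧
    (∀ f g : ℝ → ℝ, SysSol p a f g →
      (∀ r ∈ Set.Ici (0:ℝ),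
        g r = -(|(-(|g r| ^ ((2-p)/(p-1)) * g r))| ^ (p-2) * (-(|g r| ^ ((2-p)/(p-1)) * g r)))) ∧
      IsSol p a f (fun r => -(|g r| ^ ((2-p)/(p-1)) * g r)) (fun r => |g r| - f r)) ∧
    (∀ f g h hd kd : ℝ → ℝ, SysSol p a f g → IsSol p a h hd kd →
      Set.EqOn h f (Set.Ici 0)) := by
  have hpq : ((2 - p) / (p - 1) + 1) * (p - 2 + 1) = 1 := by
    linear_combination two_sub_div_sub_one_add_one_mul hp.1.ne'
  refine ⟨exists_sysSol hp, fun f₁ g₁ f₂ g₂ S₁ S₂ => ?_,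
    fun f g S => ⟨fun r _ => ?_, S.isSol hp⟩, fun f g h hd kd S S' => ?_⟩
  · have H := S₁.eqOn hp S₂
    exact ⟨fun t ht => congrArg Prod.fst (H ht), fun t ht => congrArg Prod.snd (H ht)⟩
  · exact (neg_eq_iff_eq_neg.2 (signedRpow_neg_signedRpow hpq (g r))).symm
  · exact fun t ht => congrArg Prod.fst ((S'.sysSol hp).eqOn hp S ht)
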